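/- Let A ⊆ ℝ^d be a nonempty compact set, σ ⊆ ℝ^d a nonempty compact set, and α a real number with 0 ≤ α < reach(A). If A ∩ 𝓑(σ, α) ≠ ∅, then reach(A ∩ 𝓑(σ, α)) ≥ reach(A). -/

import Mathlib

/-!
For `r < reach A`, Federer's normal inequality `2 r ⟪m - p, b - p⟫ ≤ ‖m - p‖ ‖b - p‖²` holds
(`p` a nearest point of `m` with `‖m - p‖ ≤ r`, `b ∈ A`). Summed over the two ends of a chord
`[x₁, x₂]` of `A` of half-length `h`, it puts the midpoint `m` within `r - √(r² - h²)` of `A`;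
by Apollonius, the nearest point `p` of `m` in `A` is then strictly closer than `β` to every
point within `β < r` of both `x₁` and `x₂`. If `y` had two nearest points `x₁ ≠ x₂` in
`X = A ∩ 𝓑(σ, α)` at distance `ρ < r`, taking `β = α` and `β = ρ` puts `p` in `X` strictly
closer to `y` than `x₁`, which is absurd.

Federer's inequality amounts to `p` remaining a nearest point along the whole normal ray
`p + s u`, `s ≤ r`. The ray is extended by doubling: maximizing the distance to `A` over the
ball of radius `T - t` around `a + t u`, uniqueness of nearest points forces the nearest point of
the maximizer onto the ray through the centre, hence to be `a`, and the maximizer to be `a + T u`.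
-/

open Metric Set ENNReal

/-- The reach of a set `X`: the supremum of all `r ≥ 0` such that every point `y`
with `dist (y, X) < r` has a unique nearest point in `X`. -/
noncomputable def reach {d : ℕ} (X : Set (EuclideanSpace ℝ (Fin d))) : ℝ≥0∞ :=
  sSup {r : ℝ≥0∞ | ∀ y : EuclideanSpace ℝ (Fin d),
    ENNReal.ofReal (Metric.infDist y X) < r →
      ∃! x, x ∈ X ∧ ∀ x' ∈ X, dist y x ≤ dist y x'}

open Filter Topology EuclideanGeometry
open scoped RealInnerProductSpace

section NearestPoint

variable {M : Type*} [PseudoMetricSpace M]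

def IsNearestPoint (A : Set M) (y x : M) : Prop :=
  x ∈ A ∧ ∀ b ∈ A, dist y x ≤ dist y b

def UniqueNearestWithin (A : Set M) (r : ℝ) : Prop :=
  ∀ y, infDist y A ≤ r → {x | IsNearestPoint A y x}.Subsingleton

theorem IsNearestPoint.dist_eq_infDist {A : Set M} {y x : M} (h : IsNearestPoint A y x) :
    dist y x = infDist y A :=
  le_antisymm ((le_infDist ⟨x, h.1⟩).2 h.2) (infDist_le_dist_of_mem h.1)

theorem exists_isNearestPoint {A : Set M} (hA : IsCompact A) (hne : A.Nonempty) (y : M) :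
    ∃ x, IsNearestPoint A y x := by
  obtain ⟨x, hx, hxy⟩ := hA.exists_infDist_eq_dist hne y
  exact ⟨x, hx, fun b hb => hxy ▸ infDist_le_dist_of_mem hb⟩

theorem tendsto_of_isNearestPoint {ι : Type*} {l : Filter ι} {A : Set M} (hA : IsCompact A)
    {x p : M} (hp : ∀ q, IsNearestPoint A x q → q = p) {y f : ι → M}
    (hy : Tendsto y l (𝓝 x)) (hf : ∀ i, IsNearestPoint A (y i) (f i)) :
    Tendsto f l (𝓝 p) := by
  refine hA.tendsto_nhds_of_unique_mapClusterPt (.of_forall fun i => (hf i).1)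
    fun q hqA hq => hp q ⟨hqA, fun b hb => ?_⟩
  have hpair : MapClusterPt (x, q) l fun i => (y i, f i) := by
    rw [((𝓝 x).basis_sets.prod_nhds (𝓝 q).basis_sets).mapClusterPt_iff_frequently]
    rintro ⟨s, t⟩ ⟨hs, ht⟩
    exact ((mapClusterPt_iff_frequently.1 hq t ht).and_eventually (hy hs)).mono
      fun i hi => ⟨hi.2, hi.1⟩
  have hclosed : IsClosed {z : M × M | dist z.1 z.2 ≤ dist z.1 b} :=
    isClosed_le (continuous_fst.dist continuous_snd) (continuous_fst.dist continuous_const)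
  exact hclosed.mem_of_mapClusterPt hpair (.of_forall fun i => (hf i).2 b hb)

end NearestPoint

section InnerProductSpace

variable {E : Type*} [NormedAddCommGroup E] [InnerProductSpace ℝ E]

theorem tendsto_add_smul_nhdsGT (x w : E) :
    Tendsto (fun ε : ℝ => x + ε • w) (𝓝[>] 0) (𝓝 x) := by
  have : Continuous fun ε : ℝ => x + ε • w := by fun_prop
  simpa using (this.tendsto 0).mono_left nhdsWithin_le_nhds

theorem inner_sub_nonpos_of_eventually_infDist_le {A : Set E} (hA : IsCompact A) {x p w : E}
    (hp : IsNearestPoint A x p) (huniq : ∀ q, IsNearestPoint A x q → q = p)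
    (hw : ∀ᶠ ε in 𝓝[>] (0 : ℝ), infDist (x + ε • w) A ≤ dist x p) :
    ⟪w, x - p⟫ ≤ 0 := by
  choose f hf using fun ε : ℝ => exists_isNearestPoint hA ⟨p, hp.1⟩ (x + ε • w)
  have hf_lim := tendsto_of_isNearestPoint hA huniq (tendsto_add_smul_nhdsGT x w) hf
  refine le_of_tendsto (tendsto_const_nhds.inner (tendsto_const_nhds.sub hf_lim)) ?_
  filter_upwards [hw, self_mem_nhdsWithin] with ε hε (hε0 : 0 < ε)
  have h1 : ‖(x - f ε) + ε • w‖ ≤ dist x p := by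
    rw [← (hf ε).dist_eq_infDist] at hε
    rwa [dist_eq_norm, add_sub_right_comm] at hε
  have h2 : dist x p ≤ ‖x - f ε‖ := dist_eq_norm x (f ε) ▸ hp.2 _ (hf ε).1
  have h3 : ‖(x - f ε) + ε • w‖ ^ 2 ≤ ‖x - f ε‖ ^ 2 := by
    gcongr; linarith
  rw [norm_add_sq_real, norm_smul, real_inner_smul_right, Real.norm_of_nonneg hε0.le,
    real_inner_comm] at h3
  nlinarith [sq_nonneg (ε * ‖w‖)]

theorem exists_nonneg_smul_eq_of_inner_neg_imp {n g : E} (hn : n ≠ 0)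
    (h : ∀ w, ⟪w, n⟫ < 0 → ⟪w, g⟫ ≤ 0) : ∃ l : ℝ, 0 ≤ l ∧ g = l • n := by
  have hn2 : 0 < ‖n‖ ^ 2 := by positivity
  have hng : 0 ≤ ⟪n, g⟫ := by
    have := h (-n) (by rw [inner_neg_left, real_inner_self_eq_norm_sq]; linarith)
    rwa [inner_neg_left, neg_nonpos] at this
  set l := ⟪n, g⟫ / ‖n‖ ^ 2
  set v := g - l • n
  have hvn : ⟪v, n⟫ = 0 := by
    simp only [v, l, inner_sub_left, real_inner_smul_left, real_inner_self_eq_norm_sq,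
      real_inner_comm g n]
    field_simp
    ring
  have hvg : ⟪v, g⟫ = ‖v‖ ^ 2 := by
    rw [← real_inner_self_eq_norm_sq, show g = v + l • n by simp [v], inner_add_right,
      real_inner_smul_right, hvn, mul_zero, add_zero]
  -- perturbing `v ⊥ n` slightly into the open half-space `⟪·, n⟫ < 0`
  have hv : ‖v‖ ^ 2 ≤ 0 := by
    refine ge_of_tendsto (x := 𝓝[>] (0 : ℝ)) (f := fun ε => ε * ⟪n, g⟫) ?_ ?_
    · simpa using ((continuous_mul_const ⟪n, g⟫).tendsto 0).mono_left nhdsWithin_le_nhds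
    filter_upwards [self_mem_nhdsWithin] with ε (hε : 0 < ε)
    have := h (v - ε • n) (by
      rw [inner_sub_left, hvn, real_inner_smul_left, real_inner_self_eq_norm_sq]
      nlinarith)
    rw [inner_sub_left, hvg, real_inner_smul_left] at this
    linarith
  refine ⟨l, div_nonneg hng hn2.le, ?_⟩
  rw [← sub_eq_zero]
  exact norm_eq_zero.1 (by nlinarith [norm_nonneg v])

theorem eventually_norm_add_smul_le {v w : E} (h : ⟪w, v⟫ < 0) :
    ∀ᶠ ε in 𝓝[>] (0 : ℝ), ‖v + ε • w‖ ≤ ‖v‖ := by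
  have hw : 0 < ‖w‖ ^ 2 := by
    have : w ≠ 0 := by rintro rfl; simp at h
    positivity
  filter_upwards [Ioo_mem_nhdsGT (div_pos (by linarith : 0 < -2 * ⟪w, v⟫) hw)]
    with ε ⟨hε0, hε⟩
  rw [lt_div_iff₀ hw] at hε
  refine (pow_le_pow_iff_left₀ (norm_nonneg _) (norm_nonneg _) two_ne_zero).1 ?_
  rw [norm_add_sq_real, norm_smul, real_inner_smul_right, Real.norm_of_nonneg hε0.le,
    real_inner_comm]
  nlinarith

theorem exists_nonneg_smul_of_isMaxOn_infDist {A : Set E} (hA : IsCompact A) {q x p : E}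
    {r : ℝ} (hr : 0 < r) (hx : x ∈ closedBall q r)
    (hmax : IsMaxOn (infDist · A) (closedBall q r) x)
    (hp : IsNearestPoint A x p) (huniq : ∀ p', IsNearestPoint A x p' → p' = p) (hxp : x ≠ p) :
    dist x q = r ∧ ∃ l : ℝ, 0 ≤ l ∧ x - p = l • (x - q) := by
  have hdir : ∀ w, (∀ᶠ ε in 𝓝[>] (0 : ℝ), x + ε • w ∈ closedBall q r) → ⟪w, x - p⟫ ≤ 0 :=
    fun w hw => inner_sub_nonpos_of_eventually_infDist_le hA hp huniq
      (hw.mono fun ε hε => hp.dist_eq_infDist ▸ hmax hε)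
  have hsphere : dist x q = r := by
    by_contra hne
    have hball : ball q r ∈ 𝓝 x := isOpen_ball.mem_nhds ((mem_closedBall.1 hx).lt_of_ne hne)
    have := hdir (x - p) (((tendsto_add_smul_nhdsGT x (x - p)).eventually_mem hball).mono
      fun ε hε => ball_subset_closedBall hε)
    rw [real_inner_self_eq_norm_sq] at this
    exact hxp (sub_eq_zero.1 (norm_eq_zero.1 (by nlinarith [norm_nonneg (x - p)])))
  have hxq : x - q ≠ 0 := by
    rw [sub_ne_zero]; rintro rfl; simp at hsphere; linarith
  refine ⟨hsphere, exists_nonneg_smul_eq_of_inner_neg_imp hxq fun w hw => hdir w ?_⟩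
  filter_upwards [eventually_norm_add_smul_le hw] with ε hε
  rw [mem_closedBall, dist_eq_norm, add_sub_right_comm, ← hsphere, dist_eq_norm]
  exact hε

theorem isNearestPoint_add_smul_of_le_two_mul [ProperSpace E] {A : Set E} (hA : IsCompact A)
    {R : ℝ} (hR : UniqueNearestWithin A R) {a u : E} (hu : ‖u‖ = 1) {t T : ℝ} (ht : 0 < t)
    (hat : IsNearestPoint A (a + t • u) a) (htT : t ≤ T) (hT : T ≤ 2 * t) (hTR : T ≤ R) :
    IsNearestPoint A (a + T • u) a := by
  obtain rfl | htT := htT.eq_or_lt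
  · exact hat
  have hdist : ∀ s, 0 ≤ s → dist (a + s • u) a = s := fun s hs => by
    rw [dist_eq_norm, add_sub_cancel_left, norm_smul, hu, mul_one, Real.norm_of_nonneg hs]
  set q := a + t • u
  set r := T - t
  have hr : 0 < r := sub_pos.2 htT
  have hq : infDist q A = t := hat.dist_eq_infDist ▸ hdist t ht.le
  obtain ⟨x, hx, hmax⟩ := (isCompact_closedBall q r).exists_isMaxOn
    ⟨q, mem_closedBall_self hr.le⟩ (continuous_infDist_pt A).continuousOn
  obtain ⟨p, hp⟩ := exists_isNearestPoint hA ⟨a, hat.1⟩ x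
  have htM : t ≤ dist x p := hp.dist_eq_infDist ▸ hq ▸ hmax (mem_closedBall_self hr.le)
  have hMT : dist x p ≤ T := by
    rw [hp.dist_eq_infDist]
    linarith [infDist_le_infDist_add_dist (x := x) (y := q) (s := A), mem_closedBall.1 hx]
  have huniq : ∀ p', IsNearestPoint A x p' → p' = p := fun p' hp' =>
    hR x (hp.dist_eq_infDist ▸ hMT.trans hTR) hp' hp
  obtain ⟨hsphere, l, hl, hxp⟩ := exists_nonneg_smul_of_isMaxOn_infDist hA hr hx hmax hp huniq
    (by rintro rfl; simp at htM; linarith)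
  have hnorm : ‖x - q‖ = r := by rw [← dist_eq_norm, hsphere]
  have hM : dist x p = l * r := by
    rw [dist_eq_norm, hxp, norm_smul, Real.norm_of_nonneg hl, hnorm]
  have hl1 : 1 ≤ l := by nlinarith
  -- `q` lies on the segment from `p` to `x`, so `p` is also a nearest point of `q`
  have hqp : q - p = (l - 1) • (x - q) := by rw [sub_smul, one_smul, ← hxp]; abel
  have hdqp : dist q p = (l - 1) * r := by
    rw [dist_eq_norm, hqp, norm_smul, Real.norm_of_nonneg (by linarith), hnorm]
  have hpq : IsNearestPoint A q p := by
    refine ⟨hp.1, fun b hb => ?_⟩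
    linarith [hp.2 b hb, dist_triangle x q b]
  have hpa : p = a := hR q (hq.le.trans (htT.le.trans hTR)) hpq hat
  have hlr : (l - 1) * r = t := by rw [← hdqp, hpq.dist_eq_infDist, hq]
  have hxa : x = a + T • u := by
    have htu : t • u = (l - 1) • (x - q) := by rw [← hqp, hpa]; simp [q]
    have : t • (x - q) = t • (r • u) := by
      rw [smul_comm, htu, smul_smul, mul_comm, hlr]
    have hxq : x - q = r • u := smul_right_injective E ht.ne' this
    rw [sub_eq_iff_eq_add] at hxq
    rw [hxq]
    module
  refine ⟨hat.1, fun b hb => ?_⟩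
  rw [hdist T (by linarith), ← hxa]
  linarith [hp.2 b hb]

theorem isNearestPoint_add_smul [ProperSpace E] {A : Set E} (hA : IsCompact A) {R : ℝ}
    (hR : UniqueNearestWithin A R) {a u : E} (hu : ‖u‖ = 1) {t T : ℝ} (ht : 0 < t)
    (hat : IsNearestPoint A (a + t • u) a) (htT : t ≤ T) (hTR : T ≤ R) :
    IsNearestPoint A (a + T • u) a := by
  obtain ⟨n, hn⟩ := pow_unbounded_of_one_lt (T / t) one_lt_two
  replace hn : T ≤ 2 ^ n * t := ((div_lt_iff₀ ht).1 hn).le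
  induction n generalizing T with
  | zero => rwa [(by simp at hn; linarith : T = t)]
  | succ n ih =>
    rcases le_or_gt T (2 ^ n * t) with h | h
    · exact ih htT hTR h
    · have hmid := ih (one_le_pow₀ one_le_two |> le_mul_of_one_le_left ht.le) (h.le.trans hTR)
        le_rfl
      exact isNearestPoint_add_smul_of_le_two_mul hA hR hu (by positivity) hmid h.le
        (by rwa [pow_succ, mul_comm _ (2 : ℝ), mul_assoc] at hn) hTR

/-- Federer's normal inequality (Federer, *Curvature measures*, 4.8 (7)). -/
theorem two_mul_inner_le_of_isNearestPoint [ProperSpace E] {A : Set E} (hA : IsCompact A)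
    {r : ℝ} (hR : UniqueNearestWithin A r) {m p b : E} (hp : IsNearestPoint A m p)
    (hmp : dist m p ≤ r) (hb : b ∈ A) : 2 * r * ⟪m - p, b - p⟫ ≤ dist m p * ‖b - p‖ ^ 2 := by
  obtain h0 | ht := (dist_nonneg : 0 ≤ dist m p).eq_or_lt
  · simp [dist_eq_zero.1 h0.symm]
  set t := dist m p
  set u := t⁻¹ • (m - p)
  have hu : ‖u‖ = 1 := by
    rw [norm_smul, Real.norm_of_nonneg (inv_nonneg.2 ht.le), ← dist_eq_norm,
      inv_mul_cancel₀ ht.ne']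
  have hmu : m - p = t • u := by rw [smul_smul, mul_inv_cancel₀ ht.ne', one_smul]
  have hfar := isNearestPoint_add_smul hA hR hu ht
    (by rwa [← hmu, add_sub_cancel]) hmp le_rfl
  have hsq : r ^ 2 ≤ ‖r • u - (b - p)‖ ^ 2 := by
    have := hfar.2 b hb
    rw [dist_eq_norm, dist_eq_norm, add_sub_cancel_left, norm_smul, hu, mul_one,
      Real.norm_of_nonneg (ht.le.trans hmp), show p + r • u - b = r • u - (b - p) by abel] at this
    exact pow_le_pow_left₀ (ht.le.trans hmp) this 2
  rw [norm_sub_sq_real, norm_smul, hu, real_inner_smul_left,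
    Real.norm_of_nonneg (ht.le.trans hmp)] at hsq
  rw [hmu, real_inner_smul_left]
  nlinarith

theorem dist_lt_of_isNearestPoint_midpoint [ProperSpace E] {A : Set E} (hA : IsCompact A)
    {r : ℝ} (hR : UniqueNearestWithin A r) {x₁ x₂ p z : E} {β : ℝ} (hx₁ : x₁ ∈ A) (hx₂ : x₂ ∈ A)
    (hx : x₁ ≠ x₂) (hp : IsNearestPoint A (midpoint ℝ x₁ x₂) p) (hz₁ : dist z x₁ ≤ β)
    (hz₂ : dist z x₂ ≤ β) (hβ : β < r) : dist z p < β := by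
  set m := midpoint ℝ x₁ x₂
  set h := dist x₁ x₂ / 2 with h_def
  set t := dist m p
  set s := dist z m
  have hh : 0 < h := div_pos (dist_pos.2 hx) two_pos
  have hmx₁ : dist m x₁ = h := by
    rw [dist_midpoint_left, Real.norm_two, h_def, inv_mul_eq_div]
  have hth : t ≤ h := hmx₁ ▸ hp.2 x₁ hx₁
  have hhβ : h ≤ β := by linarith [dist_triangle_left x₁ x₂ z]
  have hs : s ^ 2 + h ^ 2 ≤ β ^ 2 := by
    have := dist_sq_add_dist_sq_eq_two_mul_dist_midpoint_sq_add_half_dist_sq z x₁ x₂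
    nlinarith [dist_nonneg (x := z) (y := x₁), dist_nonneg (x := z) (y := x₂)]
  have hnormal : t * (2 * r * t) ≤ t * (t ^ 2 + h ^ 2) := by
    have h₁ := two_mul_inner_le_of_isNearestPoint hA hR hp (by linarith) hx₁
    have h₂ := two_mul_inner_le_of_isNearestPoint hA hR hp (by linarith) hx₂
    have hsum : ⟪m - p, x₁ - p⟫ + ⟪m - p, x₂ - p⟫ = 2 * t ^ 2 := by
      rw [← inner_add_right, show x₁ - p + (x₂ - p) = (2 : ℝ) • (m - p) by
        simp only [m, midpoint_eq_smul_add, invOf_eq_inv]; module, real_inner_smul_right,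
        real_inner_self_eq_norm_sq, ← dist_eq_norm]
    have hapoll := dist_sq_add_dist_sq_eq_two_mul_dist_midpoint_sq_add_half_dist_sq p x₁ x₂
    rw [dist_comm p, dist_comm p, dist_comm p, dist_eq_norm, dist_eq_norm] at hapoll
    linear_combination (h₁ + h₂) / 2 - r * hsum + t / 2 * hapoll
  have ht : 0 ≤ t := dist_nonneg
  -- that is, `t ≤ r - √(r² - h²)`
  have hmid : 2 * r * t ≤ t ^ 2 + h ^ 2 := by
    rcases ht.eq_or_lt with h0 | h0
    · rw [← h0]; nlinarith
    · exact le_of_mul_le_mul_left hnormal h0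
  refine (dist_triangle z m p).trans_lt ?_
  -- `β ≤ s + t` would give `h² ≤ β² - s² ≤ 2βt - t²`, against `hmid` as `β < r`
  by_contra! hcon
  have hsq : (β - t) ^ 2 ≤ s ^ 2 := pow_le_pow_left₀ (by linarith) (by linarith) 2
  have ht_pos : 0 < t := by nlinarith
  nlinarith [mul_pos ht_pos (sub_pos.2 hβ)]

theorem UniqueNearestWithin.subsingleton_inter_iInter_closedBall [ProperSpace E] {A : Set E}
    (hA : IsCompact A) {r : ℝ} (hR : UniqueNearestWithin A r) (σ : Set E) {α : ℝ} (hα : α < r)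
    {y : E} (hy : infDist y (A ∩ ⋂ z ∈ σ, closedBall z α) < r) :
    {x | IsNearestPoint (A ∩ ⋂ z ∈ σ, closedBall z α) y x}.Subsingleton := by
  intro x₁ hx₁ x₂ hx₂
  by_contra hx
  have hball : ∀ x ∈ A ∩ ⋂ z ∈ σ, closedBall z α, ∀ z ∈ σ, dist z x ≤ α := fun x hx z hz => by
    rw [dist_comm]; exact mem_closedBall.1 (mem_iInter₂.1 hx.2 z hz)
  obtain ⟨p, hp⟩ := exists_isNearestPoint hA ⟨x₁, hx₁.1.1⟩ (midpoint ℝ x₁ x₂)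
  have hpX : p ∈ A ∩ ⋂ z ∈ σ, closedBall z α := by
    refine ⟨hp.1, mem_iInter₂.2 fun z hz => mem_closedBall.2 ?_⟩
    rw [dist_comm]
    exact (dist_lt_of_isNearestPoint_midpoint hA hR hx₁.1.1 hx₂.1.1 hx hp
      (hball _ hx₁.1 z hz) (hball _ hx₂.1 z hz) hα).le
  have hρ : dist y x₂ = dist y x₁ := hx₂.dist_eq_infDist.trans hx₁.dist_eq_infDist.symm
  have := dist_lt_of_isNearestPoint_midpoint hA hR hx₁.1.1 hx₂.1.1 hx hp le_rfl hρ.le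
    (hx₁.dist_eq_infDist ▸ hy)
  exact (hx₁.2 p hpX).not_gt this

end InnerProductSpace

section Reach

variable {d : ℕ}

theorem uniqueNearestWithin_of_ofReal_lt_reach {A : Set (EuclideanSpace ℝ (Fin d))} {r : ℝ}
    (h : ENNReal.ofReal r < reach A) : UniqueNearestWithin A r := by
  intro y hy x₁ hx₁ x₂ hx₂
  obtain ⟨e, he, hre⟩ := lt_sSup_iff.1 h
  exact (he y ((ENNReal.ofReal_le_ofReal hy).trans_lt hre)).unique hx₁ hx₂

theorem ofReal_le_reach {X : Set (EuclideanSpace ℝ (Fin d))} (hX : IsCompact X)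
    (hne : X.Nonempty) {r : ℝ}
    (h : ∀ y, infDist y X < r → {x | IsNearestPoint X y x}.Subsingleton) :
    ENNReal.ofReal r ≤ reach X :=
  le_sSup fun y hy => by
    obtain ⟨x, hx⟩ := exists_isNearestPoint hX hne y
    exact ⟨x, hx, fun x' hx' => h y (ENNReal.ofReal_lt_ofReal_iff'.1 hy).1 hx' hx⟩

end Reach

theorem stmt_3_general {d : ℕ} (A : Set (EuclideanSpace ℝ (Fin d)))
    (hAc : IsCompact A)
    (σ : Set (EuclideanSpace ℝ (Fin d)))
    (α : ℝ) (hα : ENNReal.ofReal α < reach A)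
    (hne : (A ∩ ⋂ z ∈ σ, Metric.closedBall z α).Nonempty) :
    reach A ≤ reach (A ∩ ⋂ z ∈ σ, Metric.closedBall z α) := by
  refine le_of_forall_lt fun c hc => ?_
  obtain ⟨e, hce, heA⟩ := exists_between (max_lt hc hα)
  have he : ENNReal.ofReal e.toReal = e := ofReal_toReal heA.ne_top
  have hαe : ENNReal.ofReal α < e := (le_max_right _ _).trans_lt hce
  have hr : 0 < e.toReal := toReal_pos (zero_le.trans_lt hαe).ne' heA.ne_top
  have hαr : α < e.toReal := (ENNReal.ofReal_lt_ofReal_iff hr).1 (by rwa [he])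
  have hR : UniqueNearestWithin A e.toReal :=
    uniqueNearestWithin_of_ofReal_lt_reach (by rwa [he])
  have hXc : IsCompact (A ∩ ⋂ z ∈ σ, closedBall z α) :=
    hAc.inter_right (isClosed_biInter fun z _ => isClosed_closedBall)
  calc c < e := (le_max_left _ _).trans_lt hce
    _ = ENNReal.ofReal e.toReal := he.symm
    _ ≤ _ := ofReal_le_reach hXc hne fun y hy =>
      hR.subsingleton_inter_iInter_closedBall hAc σ hαr hy

theorem stmt_3 {d : ℕ} (A : Set (EuclideanSpace ℝ (Fin d)))
    (hA : A.Nonempty) (hAc : IsCompact A)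
    (σ : Set (EuclideanSpace ℝ (Fin d))) (hσne : σ.Nonempty) (hσc : IsCompact σ)
    (α : ℝ) (hα0 : 0 ≤ α) (hα : ENNReal.ofReal α < reach A)
    (hne : (A ∩ ⋂ z ∈ σ, Metric.closedBall z α).Nonempty) :
    reach A ≤ reach (A ∩ ⋂ z ∈ σ, Metric.closedBall z α) :=
  stmt_3_general A hAc σ α hα hne
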